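/- A point x ∈ ℝ^n satisfies (a⁰)ᵀx + ∑_{l=1}^L ξ_l (aˡ)ᵀx ≤ b⁰ + ∑_{l=1}^L ξ_l bˡ for all ξ with ‖ξ‖_2 ≤ Ω if and only if (a⁰)ᵀx + Ω·√(∑_{l=1}^L ((aˡ)ᵀx − bˡ)²) ≤ b⁰. -/

import Mathlib

/-!
The worst case of the linear form `ξ ↦ ⟪ξ, c⟫` over the ball `‖ξ‖ ≤ Ω` is `Ω ‖c‖`: Cauchy–Schwarz
bounds it, and `ξ = (Ω / ‖c‖) c` attains it. With `c_l = (aˡ)ᵀx − bˡ` the robust constraint reads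
`(a⁰)ᵀx + ⟪ξ, c⟫ ≤ b⁰` for all such `ξ`.
-/

open Finset

theorem forall_norm_le_real_inner_le_iff {E : Type*} [NormedAddCommGroup E]
    [InnerProductSpace ℝ E] (c : E) {Ω t : ℝ} (hΩ : 0 ≤ Ω) :
    (∀ ξ : E, ‖ξ‖ ≤ Ω → inner ℝ ξ c ≤ t) ↔ Ω * ‖c‖ ≤ t := by
  constructor
  · intro h
    have hc : ‖c‖⁻¹ * ‖c‖ ≤ 1 := inv_mul_le_one_of_le₀ le_rfl (norm_nonneg c)
    -- `‖c‖⁻¹ = 0` when `c = 0`, so this witness also covers the degenerate case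
    calc Ω * ‖c‖ = inner ℝ ((Ω * ‖c‖⁻¹) • c) c := by
          rw [real_inner_smul_left, real_inner_self_eq_norm_sq]
          rcases eq_or_ne ‖c‖ 0 with h0 | h0
          · simp [h0]
          · field_simp
      _ ≤ t := h _ <| by
          rw [norm_smul, Real.norm_of_nonneg (by positivity), mul_assoc]
          exact mul_le_of_le_one_right hΩ hc
  · intro h ξ hξ
    calc inner ℝ ξ c ≤ ‖ξ‖ * ‖c‖ := real_inner_le_norm ξ c
      _ ≤ Ω * ‖c‖ := mul_le_mul_of_nonneg_right hξ (norm_nonneg c)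
      _ ≤ t := h

theorem forall_sqrt_sum_sq_le_sum_mul_le_iff {ι : Type*} [Fintype ι] (c : ι → ℝ)
    {Ω t : ℝ} (hΩ : 0 ≤ Ω) :
    (∀ ξ : ι → ℝ, Real.sqrt (∑ i, ξ i ^ 2) ≤ Ω → ∑ i, ξ i * c i ≤ t) ↔
      Ω * Real.sqrt (∑ i, c i ^ 2) ≤ t := by
  have h := forall_norm_le_real_inner_le_iff (WithLp.toLp 2 c) (t := t) hΩ
  simp only [EuclideanSpace.norm_eq, Real.norm_eq_abs, sq_abs, PiLp.inner_apply,
    RCLike.inner_apply, conj_trivial] at h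
  rw [← h, (WithLp.equiv 2 (ι → ℝ)).forall_congr_left]
  simp [mul_comm]

/-- Robust constraint under ellipsoidal uncertainty is equivalent to a single
conic quadratic inequality. -/
theorem robust_ellipsoid_reformulation (n L : ℕ) (x a0 : Fin n → ℝ) (b0 : ℝ)
    (a : Fin L → Fin n → ℝ) (b : Fin L → ℝ) (Ω : ℝ) (hΩ : 0 < Ω) :
    (∀ ξ : Fin L → ℝ, Real.sqrt (∑ l, (ξ l) ^ 2) ≤ Ω →
        (∑ i, a0 i * x i) + ∑ l, ξ l * (∑ i, a l i * x i) ≤ b0 + ∑ l, ξ l * b l) ↔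
      (∑ i, a0 i * x i) +
          Ω * Real.sqrt (∑ l, ((∑ i, a l i * x i) - b l) ^ 2) ≤ b0 := by
  have h_constraint (ξ : Fin L → ℝ) :
      (∑ i, a0 i * x i) + ∑ l, ξ l * (∑ i, a l i * x i) ≤ b0 + ∑ l, ξ l * b l ↔
        ∑ l, ξ l * ((∑ i, a l i * x i) - b l) ≤ b0 - ∑ i, a0 i * x i := by
    simp only [mul_sub, sum_sub_distrib]
    constructor <;> intro h <;> linarith
  simp only [h_constraint, forall_sqrt_sum_sq_le_sum_mul_le_iff _ hΩ.le]
  constructor <;> intro h <;> linarith
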